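/- arXiv:1402.4761 — 6 statements merged into one kernel-verified Lean document; each statement's English description precedes it below -/
import Mathlib

section
/- Let A be the free associative ℚ-algebra on noncommuting generators d_1, d_2, d_3, …, and let D : A → A be any ℚ-linear derivation (satisfying the Leibniz rule) with D(d_i) = d_{i+1} for all i ≥ 1. Define C_0 = 1 and C_n = d_1·C_{n−1} + D(C_{n−1}) for n ≥ 1. Then for all n ≥ 0, C_{n+1} = Σ_{k=0}^{n} binom(n,k) · C_{n−k} · d_{k+1}; in particular C_n equals the noncommutative Bell polynomial B_n. -/
open Finset

/-- The noncommutative Bell polynomials: `B 0 = 1`,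
`B (n+1) = ∑_{k=0}^{n} (n choose k) · B (n-k) · d (k+1)`. -/
noncomputable def ncBell {A : Type*} [Ring A] (d : ℕ → A) : ℕ → A
  | 0 => 1
  | n + 1 => ∑ k ∈ Finset.range (n + 1), (n.choose k : A) * (ncBell d (n - k) * d (k + 1))
  termination_by n => n
  decreasing_by exact Nat.lt_succ_of_le (Nat.sub_le n k)

/-! Applying `d 1 * · + D` to the Bell recursion at `n`, the Leibniz rule turns each term
`C (n - k) * d (k + 1)` into `C (n - k + 1) * d (k + 1) + C (n - k) * d (k + 2)`, and Pascal's rule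
(`Finset.sum_choose_succ_mul`) reassembles these sums into the recursion at `n + 1`. -/

theorem map_one_eq_zero_of_leibniz {A : Type*} [NonAssocRing A] {D : A → A}
    (hLeib : ∀ x y : A, D (x * y) = D x * y + x * D y) : D 1 = 0 := by
  have h := hLeib 1 1
  simp only [mul_one, one_mul] at h
  exact left_eq_add.mp h

theorem map_natCast_mul {A F : Type*} [NonAssocSemiring A] [FunLike F A A]
    [AddMonoidHomClass F A A] (D : F) (n : ℕ) (x : A) : D (n * x) = n * D x := by
  rw [← nsmul_eq_mul, map_nsmul, nsmul_eq_mul]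

theorem succ_eq_sum_choose_of_leibniz_recursion {A F : Type*} [Ring A] [FunLike F A A]
    [AddMonoidHomClass F A A] {D : F} (hLeib : ∀ x y : A, D (x * y) = D x * y + x * D y)
    {d : ℕ → A} (hD : ∀ i, 1 ≤ i → D (d i) = d (i + 1)) {C : ℕ → A} (hC0 : C 0 = 1)
    (hCs : ∀ n, C (n + 1) = d 1 * C n + D (C n)) (n : ℕ) :
    C (n + 1) = ∑ k ∈ range (n + 1), (n.choose k : A) * (C (n - k) * d (k + 1)) := by
  induction n with
  | zero => simp [hCs 0, hC0, map_one_eq_zero_of_leibniz hLeib]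
  | succ n ih =>
    calc C (n + 1 + 1) = d 1 * C (n + 1) + D (C (n + 1)) := hCs _
      _ = ∑ k ∈ range (n + 1), (n.choose k : A) *
            ((d 1 * C (n - k) + D (C (n - k))) * d (k + 1) + C (n - k) * d (k + 1 + 1)) := by
        rw [ih, map_sum, mul_sum, ← sum_add_distrib]
        refine sum_congr rfl fun k _ => ?_
        rw [map_natCast_mul, hLeib, hD _ (by omega), ← mul_assoc (d 1), ← Nat.cast_comm]
        noncomm_ring
      _ = ∑ k ∈ range (n + 1), (n.choose k : A) * (C (n + 1 - k) * d (k + 1)) +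
            ∑ k ∈ range (n + 1), (n.choose k : A) * (C (n - k) * d (k + 1 + 1)) := by
        rw [← sum_add_distrib]
        refine sum_congr rfl fun k hk => ?_
        rw [Nat.sub_add_comm (Nat.lt_succ_iff.mp (mem_range.mp hk)), hCs, mul_add]
      _ = ∑ k ∈ range (n + 1 + 1), ((n + 1).choose k : A) * (C (n + 1 - k) * d (k + 1)) :=
        (sum_choose_succ_mul (fun i j => C j * d (i + 1)) n).symm

theorem eq_ncBell_of_succ_eq_sum_choose {A : Type*} [Ring A] {d C : ℕ → A} (hC0 : C 0 = 1)
    (hC : ∀ n, C (n + 1) = ∑ k ∈ range (n + 1), (n.choose k : A) * (C (n - k) * d (k + 1)))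
    (n : ℕ) : C n = ncBell d n := by
  induction n using Nat.strong_induction_on with
  | _ n ih =>
    match n with
    | 0 => rw [hC0, ncBell]
    | n + 1 =>
      rw [hC n, ncBell]
      exact sum_congr rfl fun k _ => by rw [ih (n - k) (Nat.lt_succ_of_le (Nat.sub_le n k))]

theorem stmt0 (D : FreeAlgebra ℚ ℕ →ₗ[ℚ] FreeAlgebra ℚ ℕ)
    (hLeib : ∀ x y : FreeAlgebra ℚ ℕ, D (x * y) = D x * y + x * D y)
    (hD : ∀ i : ℕ, 1 ≤ i → D (FreeAlgebra.ι ℚ i) = FreeAlgebra.ι ℚ (i + 1))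
    (C : ℕ → FreeAlgebra ℚ ℕ) (hC0 : C 0 = 1)
    (hCs : ∀ n : ℕ, C (n + 1) = FreeAlgebra.ι ℚ 1 * C n + D (C n)) :
    (∀ n : ℕ, C (n + 1) = ∑ k ∈ Finset.range (n + 1),
        (n.choose k : FreeAlgebra ℚ ℕ) * (C (n - k) * FreeAlgebra.ι ℚ (k + 1))) ∧
    (∀ n : ℕ, C n = ncBell (fun i => FreeAlgebra.ι ℚ i) n) := by
  have hBell := succ_eq_sum_choose_of_leibniz_recursion hLeib hD hC0 hCs
  exact ⟨hBell, eq_ncBell_of_succ_eq_sum_choose hC0 hBell⟩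
end

section
/- For all n ≥ k ≥ 0, the commutative partial Bell polynomial satisfies B_{n,k} = Σ over all tuples (α_1,…,α_n) of natural numbers with α_1 + α_2 + ⋯ + α_n = k and α_1 + 2α_2 + ⋯ + nα_n = n of (n!/(α_1!·α_2!⋯α_n!)) · ∏_{i=1}^{n} (d_i/i!)^{α_i}, as an identity in the polynomial ring ℚ[d_1, d_2, …]. -/
/-
Over ℚ, put `F = ∑_{i ≥ 1} d_i t^i / i!` (truncated at degree `n`, which does not affect the
coefficients of degree `≤ n`). Then `B_{n,k} = n!/k! · [t^n] F^k`: both sides vanish on the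
boundary, and the recurrence of `B_{n,k}` is the coefficient of `t^n` in
`(F^(k+1))' = (k+1) F^k F'`. Expanding `F^k` by the multinomial theorem gives the formula.
-/

open Finset MvPolynomial

/-- The (commutative or noncommutative) partial Bell polynomials:
`B (0,0) = 1`, `B (n,0) = 0` for `n ≥ 1`, `B (0,k) = 0` for `k ≥ 1`, and
`B (n+1, k+1) = ∑_{j=0}^{n} (n choose j) · B (n-j, k) · d (j+1)`. -/
noncomputable def pBell {A : Type*} [Ring A] (d : ℕ → A) : ℕ → ℕ → A
  | 0, 0 => 1
  | _ + 1, 0 => 0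
  | 0, _ + 1 => 0
  | n + 1, k + 1 =>
      ∑ j ∈ Finset.range (n + 1), (n.choose j : A) * (pBell d (n - j) k * d (j + 1))
  termination_by _ k => k

theorem Nat.cast_multinomial {ι K : Type*} [Field K] [CharZero K] (s : Finset ι) (f : ι → ℕ) :
    (Nat.multinomial s f : K) = (∑ i ∈ s, f i).factorial / ∏ i ∈ s, ((f i).factorial : K) := by
  rw [eq_div_iff (prod_ne_zero_iff.mpr fun i _ => Nat.cast_ne_zero.mpr (Nat.factorial_ne_zero _)),
    mul_comm]
  exact_mod_cast Nat.multinomial_spec s f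

section CommSemiring
variable {R : Type*} [CommSemiring R]

theorem Polynomial.succ_mul_coeff_pow_succ (F : Polynomial R) (n k : ℕ) :
    (n + 1 : R) * (F ^ (k + 1)).coeff (n + 1) =
      (k + 1 : R) * ∑ j ∈ range (n + 1), (j + 1 : R) * F.coeff (j + 1) * (F ^ k).coeff (n - j) := by
  have h := coeff_derivative (F ^ (k + 1)) n
  rw [derivative_pow_succ, mul_assoc, coeff_C_mul, mul_comm (F ^ k), coeff_mul,
    Nat.sum_antidiagonal_eq_sum_range_succ
      (fun i j => (derivative F).coeff i * (F ^ k).coeff j)] at h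
  simp only [coeff_derivative] at h
  rw [mul_comm, ← h]
  exact congrArg _ (sum_congr rfl fun j _ => by ring)

theorem Polynomial.prod_C_mul_X_pow_pow {ι : Type*} (s : Finset ι) (a : ι → R) (m e : ι → ℕ) :
    ∏ i ∈ s, (C (a i) * X ^ m i) ^ e i = C (∏ i ∈ s, a i ^ e i) * X ^ (∑ i ∈ s, m i * e i) := by
  simp only [mul_pow, prod_mul_distrib, ← map_pow, ← map_prod, ← pow_mul, prod_pow_eq_pow_sum]

noncomputable def truncSeries (y : ℕ → R) (N : ℕ) : Polynomial R :=
  ∑ i : Fin N, Polynomial.C (y i) * Polynomial.X ^ ((i : ℕ) + 1)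

theorem coeff_truncSeries_zero (y : ℕ → R) (N : ℕ) : (truncSeries y N).coeff 0 = 0 := by
  simp [truncSeries]

theorem coeff_truncSeries_succ (y : ℕ → R) {N j : ℕ} (hj : j < N) :
    (truncSeries y N).coeff (j + 1) = y j := by
  simp only [truncSeries, Polynomial.finsetSum_coeff, Polynomial.coeff_C_mul_X_pow,
    Fin.sum_univ_eq_sum_range (fun i => if j + 1 = i + 1 then y i else 0) N]
  simp [hj]

theorem coeff_truncSeries_pow (y : ℕ → R) (N n k : ℕ) :
    ((truncSeries y N) ^ k).coeff n =
      ∑ α ∈ (Nat.antidiagonalTuple N k).filter (fun α => ∑ i : Fin N, ((i : ℕ) + 1) * α i = n),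
        (Nat.multinomial univ α : R) * ∏ i : Fin N, y i ^ α i := by
  rw [truncSeries, sum_pow_eq_sum_piAntidiag, piAntidiag_univ_fin_eq_antidiagonalTuple,
    Polynomial.finsetSum_coeff, sum_filter]
  refine sum_congr rfl fun α _ => ?_
  rw [Polynomial.prod_C_mul_X_pow_pow, ← Polynomial.C_eq_natCast, ← mul_assoc,
    ← Polynomial.C_mul, Polynomial.coeff_C_mul_X_pow]
  simp only [mul_comm _ (α _), eq_comm]

end CommSemiring

section RatAlgebra
variable {R : Type*} [CommRing R] [Algebra ℚ R]

theorem Polynomial.factorial_div_mul_coeff_pow_succ (F : Polynomial R) (n k : ℕ) :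
    algebraMap ℚ R ((n + 1).factorial / (k + 1).factorial) * (F ^ (k + 1)).coeff (n + 1) =
      algebraMap ℚ R (n.factorial / k.factorial) *
        ∑ j ∈ range (n + 1), (j + 1 : R) * F.coeff (j + 1) * (F ^ k).coeff (n - j) := by
  have hfact (m : ℕ) : ((m + 1).factorial : ℚ) = (m + 1) * m.factorial := by
    push_cast [Nat.factorial_succ]; ring
  have hcast (m : ℕ) : (m + 1 : R) = algebraMap ℚ R (m + 1) := by simp
  calc algebraMap ℚ R ((n + 1).factorial / (k + 1).factorial) * (F ^ (k + 1)).coeff (n + 1)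
      = algebraMap ℚ R (n.factorial / (k + 1).factorial) *
          ((n + 1 : R) * (F ^ (k + 1)).coeff (n + 1)) := by
        rw [hcast, ← mul_assoc, ← map_mul, hfact n]
        congr 2
        field_simp
    _ = algebraMap ℚ R (n.factorial / k.factorial) *
          ∑ j ∈ range (n + 1), (j + 1 : R) * F.coeff (j + 1) * (F ^ k).coeff (n - j) := by
        rw [F.succ_mul_coeff_pow_succ, hcast, ← mul_assoc, ← map_mul, hfact k]
        congr 2
        field_simp

theorem pBell_eq_coeff_truncSeries_pow (d : ℕ → R) (k : ℕ) {n N : ℕ} (hn : n ≤ N) :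
    pBell d n k = algebraMap ℚ R (n.factorial / k.factorial) *
      ((truncSeries (fun i => algebraMap ℚ R ((i + 1).factorial : ℚ)⁻¹ * d (i + 1)) N) ^ k).coeff n := by
  set F := truncSeries (fun i => algebraMap ℚ R ((i + 1).factorial : ℚ)⁻¹ * d (i + 1)) N
  induction k generalizing n with
  | zero => cases n <;> simp [pBell, Polynomial.coeff_one]
  | succ k ih =>
    cases n with
    | zero =>
      rw [pBell, Polynomial.coeff_zero_eq_eval_zero, Polynomial.eval_pow,
        ← Polynomial.coeff_zero_eq_eval_zero, coeff_truncSeries_zero, zero_pow k.succ_ne_zero,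
        mul_zero]
    | succ n =>
      rw [F.factorial_div_mul_coeff_pow_succ, pBell, mul_sum]
      refine sum_congr rfl fun j hj => ?_
      have hjn : j ≤ n := Nat.lt_succ_iff.mp (mem_range.mp hj)
      have hq : (n.choose j : ℚ) * ((n - j).factorial / k.factorial) =
          n.factorial / k.factorial * ((j + 1) * ((j + 1).factorial : ℚ)⁻¹) := by
        rw [Nat.cast_choose ℚ hjn]
        push_cast [Nat.factorial_succ]
        field_simp
      have hqR := congrArg (algebraMap ℚ R) hq
      simp only [map_mul, map_add, map_natCast, map_one] at hqR
      rw [ih (by omega), coeff_truncSeries_succ _ (by omega)]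
      linear_combination (F ^ k).coeff (n - j) * d (j + 1) * hqR

end RatAlgebra

theorem stmt1_general (n k : ℕ) :
    pBell (fun i => (X i : MvPolynomial ℕ ℚ)) n k =
      ∑ α ∈ (Finset.Nat.antidiagonalTuple n k).filter
          (fun α => ∑ i : Fin n, ((i : ℕ) + 1) * α i = n),
        C ((n.factorial : ℚ) / ∏ i : Fin n, ((α i).factorial : ℚ)) *
          ∏ i : Fin n, (C ((((i : ℕ) + 1).factorial : ℚ)⁻¹) * X ((i : ℕ) + 1)) ^ α i := by
  rw [pBell_eq_coeff_truncSeries_pow _ k le_rfl, coeff_truncSeries_pow, mul_sum]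
  refine sum_congr rfl fun α hα => ?_
  have hk : ∑ i, α i = k := Nat.mem_antidiagonalTuple.mp (mem_filter.mp hα).1
  rw [MvPolynomial.algebraMap_eq, ← mul_assoc, ← map_natCast C, ← map_mul, Nat.cast_multinomial, hk]
  congr 2
  field_simp

theorem stmt1 (n k : ℕ) (hkn : k ≤ n) :
    pBell (fun i => (X i : MvPolynomial ℕ ℚ)) n k =
      ∑ α ∈ (Finset.Nat.antidiagonalTuple n k).filter
          (fun α => ∑ i : Fin n, ((i : ℕ) + 1) * α i = n),
        C ((n.factorial : ℚ) / ∏ i : Fin n, ((α i).factorial : ℚ)) *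
          ∏ i : Fin n, (C ((((i : ℕ) + 1).factorial : ℚ)⁻¹) * X ((i : ℕ) + 1)) ^ α i :=
  stmt1_general n k
end

section
/- For every n ≥ 1, the commutative Bell polynomial B_n equals the determinant of the n×n matrix 𝐁_n over ℚ[d_1,d_2,…] whose entries are (𝐁_n)_{ij} = binom(j−1, j−i) · d_{j−i+1} for i ≤ j, (𝐁_n)_{i+1,i} = −1 on the subdiagonal, and (𝐁_n)_{ij} = 0 for i > j+1. -/
/-!
Let `M n` be the leading `n × n` block of an infinite upper Hessenberg matrix `a` with `-1` on the
subdiagonal. Expanding `det (M (n+1))` along its last column, the minor of row `i` is block upper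
triangular, with diagonal blocks `M i` and an upper triangular block with `-1` on its diagonal;
the signs cancel and `det (M (n+1)) = ∑ i ≤ n, a i n * det (M i)`. For the matrix `𝐁` this is the
Bell recursion `B (n+1) = ∑ i ≤ n, binom n i * B i * d (n-i+1)`, read with `k = n - i`.
-/

open Finset MvPolynomial

namespace Matrix

def principalBlock {α : Type*} (a : ℕ → ℕ → α) (n : ℕ) : Matrix (Fin n) (Fin n) α :=
  of fun i j => a i j

@[simp]
lemma principalBlock_apply {α : Type*} (a : ℕ → ℕ → α) {n : ℕ} (i j : Fin n) :
    principalBlock a n i j = a i j := rfl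

lemma submatrix_castSucc_principalBlock {α : Type*} (a : ℕ → ℕ → α) (n : ℕ) :
    (principalBlock a (n + 1)).submatrix Fin.castSucc Fin.castSucc = principalBlock a n := by
  ext; simp

variable {R : Type*} [CommRing R]

/-- Deleting row `i < n` and the last column leaves the last row `(0, …, 0, -1)`: expanding along
it peels off a factor `-1` and the same kind of minor one size smaller. -/
lemma det_principalBlock_submatrix_succAbove_castSucc (a : ℕ → ℕ → R)
    (h_sub : ∀ j, a (j + 1) j = -1) (h_zero : ∀ i j, j + 1 < i → a i j = 0)
    (n : ℕ) (i : Fin (n + 1)) :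
    ((principalBlock a (n + 1)).submatrix i.succAbove Fin.castSucc).det =
      (-1) ^ (n - i) * (principalBlock a i).det := by
  induction n with
  | zero => obtain rfl : i = 0 := Fin.fin_one_eq_zero i; simp
  | succ m ih =>
    induction i using Fin.lastCases with
    | last => simp [submatrix_castSucc_principalBlock]
    | cast j =>
      set M : Matrix (Fin (m + 1)) (Fin (m + 1)) R :=
        (principalBlock a (m + 2)).submatrix j.castSucc.succAbove Fin.castSucc
      have hlast : j.castSucc.succAbove (Fin.last m) = Fin.last (m + 1) :=
        Fin.succAbove_ne_last_last (Fin.castSucc_lt_last j).ne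
      have hrow : ∀ c : Fin m, M (Fin.last m) c.castSucc = 0 := fun c =>
        h_zero _ _ (by simp [hlast])
      have hcorner : M (Fin.last m) (Fin.last m) = -1 := by
        simp [M, hlast, h_sub]
      have hminor : M.submatrix Fin.castSucc Fin.castSucc =
          (principalBlock a (m + 1)).submatrix j.succAbove Fin.castSucc := by
        ext; simp [M]
      rw [det_succ_row M (Fin.last m), Fin.sum_univ_castSucc]
      simp only [hrow, hcorner, mul_zero, zero_mul, Finset.sum_const_zero, zero_add,
        Fin.succAbove_last, hminor, ih, Fin.val_castSucc, Fin.val_last, ← two_mul, pow_mul]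
      rw [show m + 1 - (j : ℕ) = m - j + 1 by omega, pow_add]
      simp

lemma det_principalBlock_succ (a : ℕ → ℕ → R) (h_sub : ∀ j, a (j + 1) j = -1)
    (h_zero : ∀ i j, j + 1 < i → a i j = 0) (n : ℕ) :
    (principalBlock a (n + 1)).det = ∑ i : Fin (n + 1), a i n * (principalBlock a i).det := by
  rw [det_succ_column _ (Fin.last n)]
  refine Finset.sum_congr rfl fun i _ => ?_
  rw [Fin.succAbove_last, det_principalBlock_submatrix_succAbove_castSucc a h_sub h_zero,
    principalBlock_apply, Fin.val_last]
  have hsign : (-1 : R) ^ ((i : ℕ) + n) * (-1) ^ (n - i) = 1 := by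
    rw [← pow_add, show (i : ℕ) + n + (n - i) = 2 * n by omega, pow_mul]
    simp
  linear_combination (a i n * (principalBlock a i).det) * hsign

end Matrix

section Bell

variable {A : Type*} [Ring A]

lemma ncBell_zero (d : ℕ → A) : ncBell d 0 = 1 := by
  rw [ncBell]

lemma ncBell_succ' (d : ℕ → A) (n : ℕ) :
    ncBell d (n + 1) = ∑ i ∈ range (n + 1), (n.choose i : A) * (ncBell d i * d (n - i + 1)) := by
  rw [ncBell, ← sum_range_reflect]
  refine sum_congr rfl fun i hi => ?_
  have hi : i ≤ n := Nat.lt_succ_iff.mp (mem_range.mp hi)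
  rw [Nat.add_sub_cancel, Nat.sub_sub_self hi, Nat.choose_symm hi]

/-- The entries of the matrix `𝐁` in `0`-based indexing, where `binom (j-1) (j-i)` becomes
`binom j (j-i)`. -/
def bellEntry (d : ℕ → A) (i j : ℕ) : A :=
  if i ≤ j then (j.choose (j - i) : A) * d (j - i + 1) else if i = j + 1 then -1 else 0

lemma bellEntry_of_le (d : ℕ → A) {i j : ℕ} (h : i ≤ j) :
    bellEntry d i j = (j.choose (j - i) : A) * d (j - i + 1) :=
  if_pos h

lemma bellEntry_succ_self (d : ℕ → A) (j : ℕ) : bellEntry d (j + 1) j = -1 := by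
  simp [bellEntry]

lemma bellEntry_of_succ_lt (d : ℕ → A) {i j : ℕ} (h : j + 1 < i) : bellEntry d i j = 0 := by
  simp [bellEntry, show ¬i ≤ j by omega, show i ≠ j + 1 by omega]

end Bell

open Matrix in
theorem det_principalBlock_bellEntry {R : Type*} [CommRing R] (d : ℕ → R) (n : ℕ) :
    (principalBlock (bellEntry d) n).det = ncBell d n := by
  induction n using Nat.strong_induction_on with
  | _ n ih =>
  cases n with
  | zero => simp [ncBell_zero]
  | succ n =>
    rw [det_principalBlock_succ _ (bellEntry_succ_self d) (fun _ _ => bellEntry_of_succ_lt d),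
      ncBell_succ', sum_range]
    refine sum_congr rfl fun i _ => ?_
    rw [ih i (by omega), bellEntry_of_le d (by omega), Nat.choose_symm (by omega)]
    ring

theorem stmt5_general (n : ℕ) :
    ncBell (fun i => (X i : MvPolynomial ℕ ℚ)) n =
      Matrix.det (Matrix.of fun i j : Fin n =>
        if (i : ℕ) ≤ (j : ℕ) then
          (((j : ℕ).choose ((j : ℕ) - (i : ℕ)) : MvPolynomial ℕ ℚ)) *
            X ((j : ℕ) - (i : ℕ) + 1)
        else if (i : ℕ) = (j : ℕ) + 1 then -1 else 0) :=
  (det_principalBlock_bellEntry (fun i => X i) n).symm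

/-- The commutative Bell polynomial `B_n` is the determinant of the `n × n` matrix with
entries `binom (j-1) (j-i) · d (j-i+1)` for `i ≤ j` (here in 0-based indexing:
`binom j (j-i) · d (j-i+1)`), `-1` on the subdiagonal and `0` below it. -/
theorem stmt5 (n : ℕ) (hn : 1 ≤ n) :
    ncBell (fun i => (X i : MvPolynomial ℕ ℚ)) n =
      Matrix.det (Matrix.of fun i j : Fin n =>
        if (i : ℕ) ≤ (j : ℕ) then
          (((j : ℕ).choose ((j : ℕ) - (i : ℕ)) : MvPolynomial ℕ ℚ)) *
            X ((j : ℕ) - (i : ℕ) + 1)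
        else if (i : ℕ) = (j : ℕ) + 1 then -1 else 0) :=
  stmt5_general n
end

section
/- For every n ≥ 1, the noncommutative Bell polynomial B_n equals the (1,n) quasideterminant polynomial P_n(a) with entries a_{ij} := binom(j−1, i−1) · d_{j−i+1} for 1 ≤ i ≤ j ≤ n; that is, B_n = a_{1n} + Σ_{k=1}^{n−1} Σ_{1 ≤ j_1 < ⋯ < j_k < n} a_{1,j_1} a_{j_1+1,j_2} ⋯ a_{j_k+1,n} (equivalently, B_n = |𝐁_n|_{1n} where 𝐁_n is the n×n matrix with these entries on and above the diagonal, −1 on the subdiagonal and 0 below). -/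
open Finset

/-- `chainProd a n i [j₁, …, jₖ] = a i j₁ * a (j₁+1) j₂ * ⋯ * a (jₖ+1) n`. -/
noncomputable def chainProd {A : Type*} [Ring A] (a : ℕ → ℕ → A) (n : ℕ) : ℕ → List ℕ → A
  | i, [] => a i n
  | i, j :: l => a i j * chainProd a n (j + 1) l

/-- The `(1,n)` quasideterminant polynomial `P_n(a)`, with `P_0 = 1`. -/
noncomputable def quasiP {A : Type*} [Ring A] (a : ℕ → ℕ → A) : ℕ → A
  | 0 => 1
  | n + 1 => ∑ s ∈ (Finset.Icc 1 n).powerset, chainProd a (n + 1) 1 (s.sort (· ≤ ·))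

/-! Cutting a chain `1 ≤ j₁ < ⋯ < jₖ < n + 1` at its last index `jₖ = j` (or at `j = 0` when it is
empty) gives the recursion `P_{n+1} = ∑_{j ≤ n} P_j a_{j+1,n+1}`. For `a_{ij} = C(j-1,i-1) d_{j-i+1}`
the factor is `a_{j+1,n+1} = C(n,j) d_{n-j+1}`, and after `j ↦ n - j` this is the recursion of the
noncommutative Bell polynomials. -/

theorem Finset.sort_insert_of_forall_lt {α : Type*} [LinearOrder α] {s : Finset α} {a : α}
    (h : ∀ b ∈ s, b < a) : (insert a s).sort (· ≤ ·) = s.sort (· ≤ ·) ++ [a] := by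
  have ha : a ∉ s := fun ha => (h a ha).false
  refine List.Perm.eq_of_pairwise' (pairwise_sort _ _) ?_ ?_
  · exact List.pairwise_append.2 ⟨pairwise_sort _ _, List.pairwise_singleton _ _,
      fun b hb _ hc => List.mem_singleton.1 hc ▸ (h b ((mem_sort _).1 hb)).le⟩
  · rw [← Multiset.coe_eq_coe, ← Multiset.coe_add, sort_eq, sort_eq, insert_val_of_notMem ha,
      add_comm]
    rfl

section

variable {A : Type*} [Ring A] (a : ℕ → ℕ → A)

theorem chainProd_append (N i j : ℕ) (l : List ℕ) :
    chainProd a N i (l ++ [j]) = chainProd a j i l * a (j + 1) N := by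
  induction l generalizing i with
  | nil => simp [chainProd]
  | cons x l ih => simp [chainProd, ih, mul_assoc]

theorem sum_powerset_Icc_chainProd (n N : ℕ) :
    ∑ s ∈ (Icc 1 n).powerset, chainProd a N 1 (s.sort (· ≤ ·)) =
      ∑ j ∈ range (n + 1), quasiP a j * a (j + 1) N := by
  induction n with
  | zero => simp [chainProd, quasiP]
  | succ n ih =>
    have hchains_with_top : ∀ s ∈ (Icc 1 n).powerset,
        chainProd a N 1 ((insert (n + 1) s).sort (· ≤ ·)) =
          chainProd a (n + 1) 1 (s.sort (· ≤ ·)) * a (n + 2) N := by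
      intro s hs
      rw [sort_insert_of_forall_lt fun b hb => by grind, chainProd_append]
    rw [← insert_Icc_right_eq_Icc_add_one (by omega), sum_powerset_insert (by simp), ih,
      sum_congr rfl hchains_with_top, ← sum_mul, sum_range_succ _ (n + 1), quasiP]

theorem quasiP_succ (n : ℕ) :
    quasiP a (n + 1) = ∑ j ∈ range (n + 1), quasiP a j * a (j + 1) (n + 1) :=
  sum_powerset_Icc_chainProd a n (n + 1)

end

theorem ncBell_eq_quasiP {A : Type*} [Ring A] (d : ℕ → A) (n : ℕ) :
    ncBell d n = quasiP (fun i j => ((j - 1).choose (i - 1) : A) * d (j - i + 1)) n := by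
  induction n using Nat.strong_induction_on with
  | _ n ih =>
    match n with
    | 0 => simp [ncBell, quasiP]
    | n + 1 =>
      rw [ncBell, quasiP_succ, ← sum_range_reflect]
      refine sum_congr rfl fun j hj => ?_
      have hjn : j ≤ n := Nat.lt_succ_iff.1 (mem_range.1 hj)
      rw [show n + 1 - 1 - j = n - j by omega, Nat.sub_sub_self hjn, ih j (by omega),
        Nat.choose_symm hjn, show n + 1 - (j + 1) + 1 = n - j + 1 by omega,
        Nat.add_sub_cancel, Nat.add_sub_cancel, ← mul_assoc, ← mul_assoc, (Nat.cast_commute _ _).eq]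

theorem stmt8_general (n : ℕ) :
    ncBell (fun i => FreeAlgebra.ι ℚ i) n =
      quasiP (fun i j =>
        ((j - 1).choose (i - 1) : FreeAlgebra ℚ ℕ) * FreeAlgebra.ι ℚ (j - i + 1)) n :=
  ncBell_eq_quasiP _ n

/-- The noncommutative Bell polynomial `B_n` equals the `(1,n)` quasideterminant
polynomial with entries `a i j = binom (j-1) (i-1) · d (j-i+1)`. -/
theorem stmt8 (n : ℕ) (hn : 1 ≤ n) :
    ncBell (fun i => FreeAlgebra.ι ℚ i) n =
      quasiP (fun i j =>
        ((j - 1).choose (i - 1) : FreeAlgebra ℚ ℕ) * FreeAlgebra.ι ℚ (j - i + 1)) n :=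
  stmt8_general n
end

section
/- For all n, k ≥ 1, the noncommutative partial Bell polynomial satisfies B_{n,k} = Σ over all compositions (j_1,…,j_k) of n (i.e. tuples of integers j_i ≥ 1 with j_1 + ⋯ + j_k = n) of (n!/(j_1!·j_2!⋯j_k!)) · κ(j_1,…,j_k) · d_{j_1} d_{j_2} ⋯ d_{j_k}, where κ(j_1,…,j_k) := (j_1 j_2 ⋯ j_k)/(j_1 · (j_1+j_2) ⋯ (j_1+⋯+j_k)) ∈ ℚ. -/
open Finset

/-!
Splitting off the last factor `d_{j+1}` of a monomial `d_{j₁} ⋯ d_{j_k} d_{j+1}` of total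
degree `m + 1` turns its coefficient `((m+1)!/(j₁!⋯j_k!(j+1)!)) κ(j₁, …, j_k, j+1)` into
`binom(m, j) · ((m-j)!/(j₁!⋯j_k!)) κ(j₁, …, j_k)`, because the last partial sum in `κ` is
`m + 1`. So the right-hand side satisfies the recursion defining `B_{n,k}`, and the formula
follows by induction on `k`.
-/

section pBell

variable {A : Type*} [Ring A] (d : ℕ → A)

@[simp]
lemma pBell_zero_zero : pBell d 0 0 = 1 := by
  rw [pBell.eq_def]

@[simp]
lemma pBell_succ_zero (n : ℕ) : pBell d (n + 1) 0 = 0 := by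
  rw [pBell.eq_def]

@[simp]
lemma pBell_zero_succ (k : ℕ) : pBell d 0 (k + 1) = 0 := by
  rw [pBell.eq_def]

lemma pBell_succ_succ (n k : ℕ) :
    pBell d (n + 1) (k + 1) =
      ∑ j ∈ range (n + 1), (n.choose j : A) * (pBell d (n - j) k * d (j + 1)) := by
  rw [pBell.eq_def]

end pBell

def compositionTuples (k n : ℕ) : Finset (Fin k → ℕ) :=
  {j ∈ Nat.antidiagonalTuple k n | ∀ i, 1 ≤ j i}

lemma mem_compositionTuples {k n : ℕ} {j : Fin k → ℕ} :
    j ∈ compositionTuples k n ↔ ∑ i, j i = n ∧ ∀ i, 1 ≤ j i := by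
  rw [compositionTuples, mem_filter, Nat.mem_antidiagonalTuple]

@[simp]
lemma compositionTuples_zero_zero : compositionTuples 0 0 = {![]} := by
  simp [compositionTuples, Nat.antidiagonalTuple_zero_zero]

@[simp]
lemma compositionTuples_zero_succ (n : ℕ) : compositionTuples 0 (n + 1) = ∅ := by
  simp [compositionTuples, Nat.antidiagonalTuple_zero_succ]

@[simp]
lemma compositionTuples_succ_zero (k : ℕ) : compositionTuples (k + 1) 0 = ∅ := by
  simp [compositionTuples, Nat.antidiagonalTuple_zero_right]

lemma sum_compositionTuples_succ_succ {M : Type*} [AddCommMonoid M] (k m : ℕ)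
    (F : (Fin (k + 1) → ℕ) → M) :
    ∑ g ∈ compositionTuples (k + 1) (m + 1), F g =
      ∑ j ∈ range (m + 1), ∑ f ∈ compositionTuples k (m - j), F (Fin.snoc f (j + 1)) := by
  rw [sum_sigma']
  symm
  refine sum_nbij' (fun p => Fin.snoc p.2 (p.1 + 1)) (fun g => ⟨g (Fin.last k) - 1, Fin.init g⟩)
    ?_ ?_ ?_ ?_ (fun _ _ => rfl)
  · rintro ⟨j, f⟩ hp
    simp only [mem_sigma, mem_range, mem_compositionTuples] at hp ⊢
    obtain ⟨hj, hsum, hpos⟩ := hp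
    refine ⟨?_, Fin.lastCases (by simp) fun i => by simpa using hpos i⟩
    rw [Fin.sum_univ_castSucc]
    simp only [Fin.snoc_castSucc, Fin.snoc_last, hsum]
    omega
  · intro g hg
    simp only [mem_sigma, mem_range, mem_compositionTuples] at hg ⊢
    obtain ⟨hsum, hpos⟩ := hg
    rw [Fin.sum_univ_castSucc] at hsum
    have hlast := hpos (Fin.last k)
    exact ⟨by omega, by simp only [Fin.init]; omega, fun i => hpos i.castSucc⟩
  · rintro ⟨j, f⟩ _
    simp
  · intro g hg
    have hlast := (mem_compositionTuples.1 hg).2 (Fin.last k)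
    simp only [Nat.sub_add_cancel hlast, Fin.snoc_init_self]

/-- `(n!/(j₁!⋯j_k!)) · κ(j₁,…,j_k)` -/
noncomputable def bellCoeff {k : ℕ} (n : ℕ) (j : Fin k → ℕ) : ℚ :=
  ((n.factorial : ℚ) / ∏ i, ((j i).factorial : ℚ)) *
    ((∏ i, (j i : ℚ)) / ∏ i, (∑ l ∈ Iic i, (j l : ℚ)))

@[simp]
lemma bellCoeff_nil : bellCoeff 0 (![] : Fin 0 → ℕ) = 1 := by
  simp [bellCoeff]

lemma bellCoeff_snoc {k m j : ℕ} (hj : j ≤ m) (f : Fin k → ℕ) (hf : ∑ i, f i = m - j) :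
    bellCoeff (m + 1) (Fin.snoc f (j + 1)) = (m.choose j : ℚ) * bellCoeff (m - j) f := by
  have hlast :
      ∑ l ∈ Iic (Fin.last k), ((Fin.snoc f (j + 1) : Fin (k + 1) → ℕ) l : ℚ) = m + 1 := by
    rw [← Fin.top_eq_last, Iic_top, Fin.sum_univ_castSucc]
    simp only [Fin.snoc_castSucc, Fin.snoc_last]
    rw [← Nat.cast_sum, hf]
    push_cast [hj]
    ring
  simp only [bellCoeff, Fin.prod_univ_castSucc, Fin.sum_Iic_castSucc, Fin.snoc_castSucc,
    Fin.snoc_last, hlast, Nat.cast_choose ℚ hj, Nat.factorial_succ]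
  push_cast
  field_simp

lemma pBell_eq_sum_compositionTuples {A : Type*} [Ring A] [Algebra ℚ A] (d : ℕ → A)
    (k n : ℕ) :
    pBell d n k =
      ∑ j ∈ compositionTuples k n, bellCoeff n j • (List.ofFn fun i => d (j i)).prod := by
  induction k generalizing n with
  | zero => cases n <;> simp
  | succ k ih =>
    cases n with
    | zero => simp
    | succ m =>
      rw [pBell_succ_succ, sum_compositionTuples_succ_succ]
      refine sum_congr rfl fun j hj => ?_
      rw [ih, sum_mul, mul_sum]
      refine sum_congr rfl fun f hf => ?_
      rw [bellCoeff_snoc (by simpa [Nat.lt_succ_iff] using hj) f (mem_compositionTuples.1 hf).1,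
        List.ofFn_succ', List.prod_concat]
      simp only [Fin.snoc_castSucc, Fin.snoc_last, smul_mul_assoc, mul_smul]
      rw [← nsmul_eq_mul, ← Nat.cast_smul_eq_nsmul ℚ]

theorem stmt10_general (n k : ℕ) :
    pBell (fun i => FreeAlgebra.ι ℚ i) n k =
      ∑ j ∈ (Finset.Nat.antidiagonalTuple k n).filter (fun j => ∀ i : Fin k, 1 ≤ j i),
        (((n.factorial : ℚ) / ∏ i : Fin k, ((j i).factorial : ℚ)) *
            ((∏ i : Fin k, (j i : ℚ)) /
              ∏ i : Fin k, (∑ l ∈ Finset.Iic i, (j l : ℚ)))) •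
          (List.ofFn fun i : Fin k => FreeAlgebra.ι ℚ (j i)).prod :=
  pBell_eq_sum_compositionTuples _ k n

/-- `B_{n,k} = ∑_{compositions (j₁,…,j_k) of n} (n!/(j₁!⋯j_k!)) κ(j₁,…,j_k) d_{j₁}⋯d_{j_k}`
with `κ(j₁,…,j_k) = (j₁⋯j_k)/(j₁(j₁+j₂)⋯(j₁+⋯+j_k))`. -/
theorem stmt10 (n k : ℕ) (hn : 1 ≤ n) (hk : 1 ≤ k) :
    pBell (fun i => FreeAlgebra.ι ℚ i) n k =
      ∑ j ∈ (Finset.Nat.antidiagonalTuple k n).filter (fun j => ∀ i : Fin k, 1 ≤ j i),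
        (((n.factorial : ℚ) / ∏ i : Fin k, ((j i).factorial : ℚ)) *
            ((∏ i : Fin k, (j i : ℚ)) /
              ∏ i : Fin k, (∑ l ∈ Finset.Iic i, (j l : ℚ)))) •
          (List.ofFn fun i : Fin k => FreeAlgebra.ι ℚ (j i)).prod :=
  stmt10_general n k
end

section
/- For every k ≥ 1 and all positive real numbers j_1, …, j_k, Σ_{σ ∈ S_k} ∏_{i=1}^{k} j_{σ(i)} / (j_{σ(1)} + j_{σ(2)} + ⋯ + j_{σ(i)}) = 1, where the sum runs over all permutations σ of {1,…,k}; i.e. the coefficients κ form a partition of unity on the symmetric group S_k. -/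
/-!
Read the ordering backwards, so that the `i`-th factor divides by the weight still remaining
after `i - 1` elements have been removed. Then `σ ↦ ∏ᵢ j(σ i) / (weight remaining)` is the
probability of drawing the elements in the order `σ` when each is drawn with probability
proportional to its weight; these probabilities sum to `1`. Concretely, conditioning on the first
element `p` splits off the factor `j p / ∑ j` and leaves the same sum for the other `n` elements.
-/

open Finset Equiv

lemma prod_div_sum_Ici_succ {K : Type*} [Semifield K] {n : ℕ} (j : Fin (n + 1) → K)
    (σ : Perm (Fin (n + 1))) :
    ∏ i, j (σ i) / ∑ l ∈ Ici i, j (σ l) =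
      j (σ 0) / (∑ l, j l) * ∏ i : Fin n, j (σ i.succ) / ∑ l ∈ Ici i, j (σ l.succ) := by
  have hIci_zero : Ici (0 : Fin (n + 1)) = univ := by ext; simp
  rw [Fin.prod_univ_succ, hIci_zero, Fintype.sum_equiv σ _ _ fun _ => rfl]
  simp only [Fin.sum_Ici_succ]

theorem sum_perm_prod_div_sum_Ici {K : Type*} [Field K] [LinearOrder K] [IsStrictOrderedRing K]
    (n : ℕ) (j : Fin n → K) (hj : ∀ i, 0 < j i) :
    ∑ σ : Perm (Fin n), ∏ i, j (σ i) / ∑ l ∈ Ici i, j (σ l) = 1 := by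
  induction n with
  | zero => simp
  | succ n ih =>
    have htotal : ∑ l, j l ≠ 0 := (sum_pos (fun l _ => hj l) univ_nonempty).ne'
    rw [← Perm.decomposeFin.symm.sum_comp, Fintype.sum_prod_type]
    calc ∑ p, ∑ e : Perm (Fin n), ∏ i, j (Perm.decomposeFin.symm (p, e) i) /
            ∑ l ∈ Ici i, j (Perm.decomposeFin.symm (p, e) l)
        = ∑ p, j p / (∑ l, j l) * ∑ e : Perm (Fin n),
            ∏ i, j (swap 0 p (e i).succ) / ∑ l ∈ Ici i, j (swap 0 p (e l).succ) := by
          simp only [prod_div_sum_Ici_succ, Perm.decomposeFin_symm_apply_zero,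
            Perm.decomposeFin_symm_apply_succ, mul_sum]
      _ = ∑ p, j p / ∑ l, j l := by
          refine sum_congr rfl fun p _ => ?_
          rw [ih (fun m => j (swap 0 p m.succ)) fun _ => hj _, mul_one]
      _ = 1 := by rw [← sum_div, div_self htotal]

theorem stmt13_general (k : ℕ) (j : Fin k → ℝ) (hj : ∀ i, 0 < j i) :
    ∑ σ : Equiv.Perm (Fin k),
      ∏ i : Fin k, j (σ i) / (∑ l ∈ Finset.Iic i, j (σ l)) = 1 := by
  rw [← Equiv.sum_comp (Equiv.mulRight Fin.revPerm), ← sum_perm_prod_div_sum_Ici k j hj]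
  refine sum_congr rfl fun σ _ => Fintype.prod_equiv Fin.revPerm _ _ fun i => ?_
  rw [Fin.revPerm_apply, ← Fin.map_revPerm_Iic, sum_map]
  rfl

/-- The coefficients `κ` form a partition of unity on the symmetric group `S_k`:
for positive reals `j₁, …, j_k`,
`∑_{σ ∈ S_k} ∏_{i=1}^{k} j_{σ(i)} / (j_{σ(1)} + ⋯ + j_{σ(i)}) = 1`. -/
theorem stmt13 (k : ℕ) (hk : 1 ≤ k) (j : Fin k → ℝ) (hj : ∀ i, 0 < j i) :
    ∑ σ : Equiv.Perm (Fin k),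
      ∏ i : Fin k, j (σ i) / (∑ l ∈ Finset.Iic i, j (σ l)) = 1 :=
  stmt13_general k j hj
end
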